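/- arXiv:1406.5551 — 4 statements merged into one kernel-verified Lean document; each statement's English description precedes it below -/
import Mathlib

section
/- Let X be a pointed metric space, Y a real Banach space, and 1 ≤ p < ∞. Then μ_p is a norm on the vector space ℱ(X;Y) of Y-valued molecules on X: μ_p(m) ≥ 0, μ_p(m) = 0 implies m = 0, μ_p(αm) = |α|·μ_p(m) for all α ∈ ℝ, and μ_p(m₁ + m₂) ≤ μ_p(m₁) + μ_p(m₂) for all molecules m, m₁, m₂. -/
/-!
Nonnegativity and homogeneity are read off the representations: multiplying every `λ_i` by `α`
multiplies the cost by `|α|`.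

Definiteness comes from duality. For a `1`-Lipschitz `f : X → ℝ` and `y* ∈ B_{Y*}`, Hölder's
inequality bounds `|∑_x f x · y* (m x)|` by the cost of every representation of `m`, hence by
`μ_p(m)`; if `m a ≠ 0`, a bump function at `a` and a functional norming `m a` make this positive.

For the triangle inequality, the substitution `λ_i ↦ t λ_i`, `y_i ↦ t⁻¹ y_i` changes neither the
molecule nor the cost, so a representation of cost `c > 0` can be balanced to have
`∑ |λ_i|^p d(x_i,x_i')^p = c` and weak factor at most `c^{1/p*}`. Concatenating balanced
representations of `m₁` and `m₂` represents `m₁ + m₂` at cost at most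
`(c₁ + c₂)^{1/p} (c₁ + c₂)^{1/p*} = c₁ + c₂`.
-/

open scoped BigOperators NNReal

noncomputable section

variable {X : Type*} [MetricSpace X] {Y : Type*} [NormedAddCommGroup Y] [NormedSpace ℝ Y]

/-- The atom `y·m_{x x'}`: the finitely supported function equal to `y` at `x`,
`-y` at `x'` and `0` elsewhere. -/
def molAtom (x x' : X) (y : Y) : X →₀ Y :=
  Finsupp.single x y - Finsupp.single x' y

/-- The space `ℱ(X;Y)` of `Y`-valued molecules on `X`: finitely supported functions
`m : X → Y` whose values sum to `0`. -/
def MolSpace (X : Type*) (Y : Type*) [NormedAddCommGroup Y] [NormedSpace ℝ Y] :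
    Submodule ℝ (X →₀ Y) :=
  LinearMap.ker (Finsupp.lsum ℝ fun _ : X => (LinearMap.id : Y →ₗ[ℝ] Y))

/-- `sup_{y* ∈ B_{Y*}} (Σ_i |y*(y_i)|^q)^{1/q}`, the weak `l_q` norm of a finite family in `Y`. -/
def dualBallSup (q : ℝ) {n : ℕ} (y : Fin n → Y) : ℝ :=
  ⨆ g : {g : Y →L[ℝ] ℝ // ‖g‖ ≤ 1}, (∑ i, |g.1 (y i)| ^ q) ^ (1 / q)

/-- The weak factor in the definition of `μ_p`: for `p = 1` it is
`sup_{y* ∈ B_{Y*}} max_i |y*(y_i)|`, and for `p > 1` it is the weak `l_{p*}` norm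
with `p* = p/(p-1)` the conjugate exponent. -/
def weakFactor (p : ℝ) {n : ℕ} (y : Fin n → Y) : ℝ :=
  if p = 1 then ⨆ g : {g : Y →L[ℝ] ℝ // ‖g‖ ≤ 1}, ⨆ i, |g.1 (y i)|
  else dualBallSup (p / (p - 1)) y

/-- The norm `μ_p` on molecules: the infimum over all representations
`m = Σ_i λ_i y_i m_{x_i x_i'}` of
`(Σ_i |λ_i|^p d(x_i,x_i')^p)^{1/p} · sup_{y* ∈ B_{Y*}} (Σ_i |y*(y_i)|^{p*})^{1/p*}`. -/
def muNorm (p : ℝ) (m : X →₀ Y) : ℝ :=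
  sInf {c : ℝ | ∃ (n : ℕ) (lam : Fin n → ℝ) (y : Fin n → Y) (x x' : Fin n → X),
    m = ∑ i, lam i • molAtom (x i) (x' i) (y i) ∧
    c = (∑ i, |lam i| ^ p * dist (x i) (x' i) ^ p) ^ (1 / p) * weakFactor p y}

open Pointwise

local notation "𝔹" => {g : Y →L[ℝ] ℝ // ‖g‖ ≤ 1}

section WeakFactor

variable {n : ℕ}

theorem abs_apply_le_norm (g : 𝔹) (y : Y) : |g.1 y| ≤ ‖y‖ :=
  (g.1.le_opNorm y).trans (mul_le_of_le_one_left (norm_nonneg y) g.2)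

theorem dualBallSup_nonneg (q : ℝ) (y : Fin n → Y) : 0 ≤ dualBallSup q y :=
  Real.iSup_nonneg fun _ => by positivity

theorem le_dualBallSup {q : ℝ} (hq : 0 ≤ q) (y : Fin n → Y) (g : 𝔹) :
    (∑ i, |g.1 (y i)| ^ q) ^ (1 / q) ≤ dualBallSup q y := by
  unfold dualBallSup
  refine le_ciSup (f := fun g : 𝔹 => (∑ i, |g.1 (y i)| ^ q) ^ (1 / q))
    ⟨(∑ i, ‖y i‖ ^ q) ^ (1 / q), ?_⟩ g
  rintro _ ⟨g, rfl⟩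
  dsimp only
  gcongr with i
  exact abs_apply_le_norm g _

theorem dualBallSup_smul {q : ℝ} (hq : q ≠ 0) (c : ℝ) (y : Fin n → Y) :
    dualBallSup q (c • y) = |c| * dualBallSup q y := by
  rw [dualBallSup, dualBallSup, Real.mul_iSup_of_nonneg (abs_nonneg c)]
  congr 1 with g
  simp only [Pi.smul_apply, map_smul, smul_eq_mul, abs_mul, Real.mul_rpow (abs_nonneg c)
    (abs_nonneg _), ← Finset.mul_sum]
  rw [Real.mul_rpow (by positivity) (by positivity), ← Real.rpow_mul (abs_nonneg c),
    mul_one_div_cancel hq, Real.rpow_one]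

theorem dualBallSup_append_le {q : ℝ} (hq : 0 < q) {n₁ n₂ : ℕ} {z₁ : Fin n₁ → Y}
    {z₂ : Fin n₂ → Y} {a₁ a₂ : ℝ} (ha₁ : 0 ≤ a₁) (ha₂ : 0 ≤ a₂)
    (h₁ : dualBallSup q z₁ ≤ a₁ ^ (1 / q)) (h₂ : dualBallSup q z₂ ≤ a₂ ^ (1 / q)) :
    dualBallSup q (Fin.append z₁ z₂) ≤ (a₁ + a₂) ^ (1 / q) := by
  refine Real.iSup_le (fun g => ?_) (by positivity)
  have sum_le {k : ℕ} (z : Fin k → Y) (a : ℝ) (ha : 0 ≤ a) (h : dualBallSup q z ≤ a ^ (1 / q)) :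
      ∑ i, |g.1 (z i)| ^ q ≤ a :=
    (Real.rpow_le_rpow_iff (by positivity) ha (one_div_pos.2 hq)).1
      ((le_dualBallSup hq.le z g).trans h)
  rw [Fin.sum_univ_add]
  simp only [Fin.append_left, Fin.append_right]
  gcongr
  exacts [sum_le z₁ a₁ ha₁ h₁, sum_le z₂ a₂ ha₂ h₂]

theorem weakFactor_one (y : Fin n → Y) :
    weakFactor 1 y = ⨆ g : 𝔹, ⨆ i, |g.1 (y i)| :=
  if_pos rfl

theorem weakFactor_of_ne_one {p : ℝ} (hp : p ≠ 1) (y : Fin n → Y) :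
    weakFactor p y = dualBallSup p.conjExponent y :=
  if_neg hp

theorem abs_apply_le_weakFactor_one (y : Fin n → Y) (g : 𝔹) (i : Fin n) :
    |g.1 (y i)| ≤ weakFactor 1 y := by
  have bdd (g : 𝔹) : ⨆ i, |g.1 (y i)| ≤ ∑ i, ‖y i‖ :=
    Real.iSup_le (fun i => (abs_apply_le_norm g _).trans
      (Finset.single_le_sum (fun i _ => norm_nonneg (y i)) (Finset.mem_univ i))) (by positivity)
  rw [weakFactor_one]
  exact (le_ciSup (Set.finite_range _).bddAbove i).trans
    (le_ciSup (f := fun g : 𝔹 => ⨆ i, |g.1 (y i)|) ⟨_, Set.forall_mem_range.2 bdd⟩ g)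

theorem weakFactor_nonneg (p : ℝ) (y : Fin n → Y) : 0 ≤ weakFactor p y := by
  rcases eq_or_ne p 1 with rfl | hp
  · rw [weakFactor_one]
    exact Real.iSup_nonneg fun _ => Real.iSup_nonneg fun _ => abs_nonneg _
  · exact weakFactor_of_ne_one hp y ▸ dualBallSup_nonneg _ y

theorem weakFactor_smul {p : ℝ} (hp : p ≠ 0) (c : ℝ) (y : Fin n → Y) :
    weakFactor p (c • y) = |c| * weakFactor p y := by
  rcases eq_or_ne p 1 with rfl | hp1
  · simp only [weakFactor_one, Real.mul_iSup_of_nonneg (abs_nonneg c), Pi.smul_apply, map_smul,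
      smul_eq_mul, abs_mul]
  · rw [weakFactor_of_ne_one hp1, weakFactor_of_ne_one hp1,
      dualBallSup_smul (q := p.conjExponent) (div_ne_zero hp (sub_ne_zero.2 hp1))]

theorem sum_mul_abs_le_weakFactor {p : ℝ} (hp : 1 ≤ p) (a : Fin n → ℝ) (ha : ∀ i, 0 ≤ a i)
    (y : Fin n → Y) (g : 𝔹) :
    ∑ i, a i * |g.1 (y i)| ≤ (∑ i, a i ^ p) ^ (1 / p) * weakFactor p y := by
  rcases hp.eq_or_lt with rfl | hp
  · simp only [Real.rpow_one, div_one, Finset.sum_mul]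
    gcongr with i
    · exact ha i
    · exact abs_apply_le_weakFactor_one y g i
  · have hpq := Real.HolderConjugate.conjExponent hp
    rw [weakFactor_of_ne_one hp.ne']
    calc ∑ i, a i * |g.1 (y i)|
        ≤ (∑ i, a i ^ p) ^ (1 / p) * (∑ i, |g.1 (y i)| ^ p.conjExponent) ^ (1 / p.conjExponent) :=
          Real.inner_le_Lp_mul_Lq_of_nonneg _ hpq (fun i _ => ha i) (fun i _ => abs_nonneg _)
      _ ≤ (∑ i, a i ^ p) ^ (1 / p) * dualBallSup p.conjExponent y :=
          mul_le_mul_of_nonneg_left (le_dualBallSup hpq.symm.nonneg y g)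
            (Real.rpow_nonneg (Finset.sum_nonneg fun i _ => Real.rpow_nonneg (ha i) _) _)

theorem weakFactor_append_le {p : ℝ} (hp : 1 ≤ p) {n₁ n₂ : ℕ} {z₁ : Fin n₁ → Y}
    {z₂ : Fin n₂ → Y} {a₁ a₂ : ℝ} (ha₁ : 0 ≤ a₁) (ha₂ : 0 ≤ a₂)
    (h₁ : weakFactor p z₁ ≤ a₁ ^ (1 - 1 / p)) (h₂ : weakFactor p z₂ ≤ a₂ ^ (1 - 1 / p)) :
    weakFactor p (Fin.append z₁ z₂) ≤ (a₁ + a₂) ^ (1 - 1 / p) := by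
  rcases hp.eq_or_lt with rfl | hp
  · simp only [div_one, sub_self, Real.rpow_zero] at h₁ h₂ ⊢
    rw [weakFactor_one]
    refine Real.iSup_le (fun g => Real.iSup_le (fun i => ?_) zero_le_one) zero_le_one
    refine Fin.addCases (fun i => ?_) (fun i => ?_) i
    · simpa only [Fin.append_left] using (abs_apply_le_weakFactor_one z₁ g i).trans h₁
    · simpa only [Fin.append_right] using (abs_apply_le_weakFactor_one z₂ g i).trans h₂
  · have hpq := Real.HolderConjugate.conjExponent hp
    rw [one_div, hpq.one_sub_inv, ← one_div] at h₁ h₂ ⊢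
    rw [weakFactor_of_ne_one hp.ne'] at h₁ h₂ ⊢
    exact dualBallSup_append_le hpq.symm.pos ha₁ ha₂ h₁ h₂

end WeakFactor

/-- A representation `∑ i, λ_i y_i m_{x_i x_i'}`, with `λ = coef`, `y = vec`, `x = src`,
`x' = tgt`. -/
structure MolRep (X Y : Type*) where
  len : ℕ
  coef : Fin len → ℝ
  vec : Fin len → Y
  src : Fin len → X
  tgt : Fin len → X

namespace MolRep

def mol (r : MolRep X Y) : X →₀ Y :=
  ∑ i, r.coef i • molAtom (r.src i) (r.tgt i) (r.vec i)

def lpSum (p : ℝ) (r : MolRep X Y) : ℝ :=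
  ∑ i, |r.coef i| ^ p * dist (r.src i) (r.tgt i) ^ p

def cost (p : ℝ) (r : MolRep X Y) : ℝ :=
  r.lpSum p ^ (1 / p) * weakFactor p r.vec

def nil : MolRep X Y := ⟨0, Fin.elim0, Fin.elim0, Fin.elim0, Fin.elim0⟩

def append (r₁ r₂ : MolRep X Y) : MolRep X Y :=
  ⟨r₁.len + r₂.len, Fin.append r₁.coef r₂.coef, Fin.append r₁.vec r₂.vec,
    Fin.append r₁.src r₂.src, Fin.append r₁.tgt r₂.tgt⟩

def smulCoef (c : ℝ) (r : MolRep X Y) : MolRep X Y :=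
  { r with coef := c • r.coef }

def smulVec (c : ℝ) (r : MolRep X Y) : MolRep X Y :=
  { r with vec := c • r.vec }

end MolRep

section Molecules

omit [MetricSpace X]

theorem mem_molSpace_iff {m : X →₀ Y} : m ∈ MolSpace X Y ↔ (m.sum fun _ y => y) = 0 := by
  rw [MolSpace, LinearMap.mem_ker, Finsupp.lsum_apply]
  rfl

theorem molAtom_smul (x x' : X) (c : ℝ) (y : Y) :
    molAtom x x' (c • y) = c • molAtom x x' y := by
  simp only [molAtom, Finsupp.smul_single, smul_sub]

namespace MolRep

theorem mol_nil : (nil : MolRep X Y).mol = 0 := rfl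

theorem mol_append (r₁ r₂ : MolRep X Y) : (r₁.append r₂).mol = r₁.mol + r₂.mol := by
  simp only [mol, append]
  exact (Fin.sum_univ_add _).trans (by simp only [Fin.append_left, Fin.append_right])

theorem mol_smulCoef (c : ℝ) (r : MolRep X Y) : (r.smulCoef c).mol = c • r.mol := by
  simp only [mol, smulCoef, Finset.smul_sum, smul_smul, Pi.smul_apply, smul_eq_mul]
  rfl

theorem mol_smulVec (c : ℝ) (r : MolRep X Y) : (r.smulVec c).mol = c • r.mol := by
  simp only [mol, smulVec, Finset.smul_sum, Pi.smul_apply, molAtom_smul, smul_comm c]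
  rfl

theorem exists_mol_eq {m : X →₀ Y} (hm : m ∈ MolSpace X Y) :
    ∃ r : MolRep X Y, r.mol = m := by
  classical
  rcases m.support.eq_empty_or_nonempty with h | ⟨x₀, -⟩
  · exact ⟨nil, by rw [mol_nil, Finsupp.support_eq_empty.1 h]⟩
  let e := m.support.equivFin
  refine ⟨⟨m.support.card, 1, fun i => m (e.symm i), fun i => e.symm i, fun _ => x₀⟩, ?_⟩
  calc (∑ i, (1 : ℝ) • molAtom (e.symm i : X) x₀ (m (e.symm i)))
      = ∑ x ∈ m.support, molAtom x x₀ (m x) := by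
        simp only [one_smul]
        exact (e.symm.sum_comp fun x : m.support => molAtom (x : X) x₀ (m x)).trans
          (Finset.sum_coe_sort m.support fun x => molAtom x x₀ (m x))
    _ = m - Finsupp.single x₀ (m.sum fun _ y => y) := by
        simp only [molAtom, Finset.sum_sub_distrib, Finsupp.sum, Finsupp.single_finsetSum]
        congr 1
        exact Finsupp.sum_single m
    _ = m := by rw [mem_molSpace_iff.1 hm, Finsupp.single_zero, sub_zero]

end MolRep

def lipPairing (f : X → ℝ) (g : Y →L[ℝ] ℝ) : (X →₀ Y) →ₗ[ℝ] ℝ :=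
  Finsupp.lsum ℝ fun x => f x • (g : Y →ₗ[ℝ] ℝ)

theorem lipPairing_apply (f : X → ℝ) (g : Y →L[ℝ] ℝ) (m : X →₀ Y) :
    lipPairing f g m = m.sum fun x y => f x * g y :=
  Finsupp.lsum_apply _ _ _

theorem lipPairing_mol (f : X → ℝ) (g : Y →L[ℝ] ℝ) (r : MolRep X Y) :
    lipPairing f g r.mol = ∑ i, r.coef i * ((f (r.src i) - f (r.tgt i)) * g (r.vec i)) := by
  simp only [MolRep.mol, map_sum, map_smul, molAtom, map_sub, lipPairing, Finsupp.lsum_single,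
    LinearMap.smul_apply, ContinuousLinearMap.coe_coe, smul_eq_mul, ← sub_mul]

end Molecules

namespace MolRep

section LpSum

omit [NormedAddCommGroup Y] [NormedSpace ℝ Y]

theorem lpSum_nonneg (p : ℝ) (r : MolRep X Y) : 0 ≤ r.lpSum p := by
  unfold lpSum; positivity

theorem lpSum_append (p : ℝ) (r₁ r₂ : MolRep X Y) :
    (r₁.append r₂).lpSum p = r₁.lpSum p + r₂.lpSum p := by
  simp only [lpSum, append]
  exact (Fin.sum_univ_add _).trans (by simp only [Fin.append_left, Fin.append_right])

theorem lpSum_smulCoef (p c : ℝ) (r : MolRep X Y) :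
    (r.smulCoef c).lpSum p = |c| ^ p * r.lpSum p := by
  simp only [lpSum, smulCoef, Finset.mul_sum, Pi.smul_apply, smul_eq_mul, abs_mul,
    Real.mul_rpow (abs_nonneg c) (abs_nonneg _), mul_assoc]
  rfl

end LpSum

theorem cost_nonneg (p : ℝ) (r : MolRep X Y) : 0 ≤ r.cost p :=
  mul_nonneg (Real.rpow_nonneg (r.lpSum_nonneg p) _) (weakFactor_nonneg p r.vec)

theorem cost_nil {p : ℝ} (hp : p ≠ 0) : (nil : MolRep X Y).cost p = 0 := by
  have : (nil : MolRep X Y).lpSum p = 0 := Fin.sum_univ_zero _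
  rw [cost, this, Real.zero_rpow (one_div_ne_zero hp), zero_mul]

theorem cost_smulCoef {p : ℝ} (hp : p ≠ 0) (c : ℝ) (r : MolRep X Y) :
    (r.smulCoef c).cost p = |c| * r.cost p := by
  rw [cost, cost, lpSum_smulCoef, Real.mul_rpow (by positivity) (r.lpSum_nonneg p),
    ← Real.rpow_mul (abs_nonneg c), mul_one_div_cancel hp, Real.rpow_one, mul_assoc]
  rfl

end MolRep

theorem muNorm_eq_sInf_cost (p : ℝ) (m : X →₀ Y) :
    muNorm p m = sInf (MolRep.cost p '' {r | r.mol = m}) := by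
  unfold muNorm
  congr 1
  ext c
  constructor
  · rintro ⟨n, coef, vec, src, tgt, hm, rfl⟩
    exact ⟨⟨n, coef, vec, src, tgt⟩, hm.symm, rfl⟩
  · rintro ⟨⟨n, coef, vec, src, tgt⟩, hm, rfl⟩
    exact ⟨n, coef, vec, src, tgt, hm.symm, rfl⟩

theorem bddBelow_cost_image (p : ℝ) (s : Set (MolRep X Y)) : BddBelow (MolRep.cost p '' s) :=
  ⟨0, Set.forall_mem_image.2 fun r _ => r.cost_nonneg p⟩

theorem muNorm_nonneg (p : ℝ) (m : X →₀ Y) : 0 ≤ muNorm p m := by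
  rw [muNorm_eq_sInf_cost]
  exact Real.sInf_nonneg (Set.forall_mem_image.2 fun r _ => r.cost_nonneg p)

theorem muNorm_mol_le_cost (p : ℝ) (r : MolRep X Y) : muNorm p r.mol ≤ r.cost p := by
  rw [muNorm_eq_sInf_cost]
  exact csInf_le (bddBelow_cost_image p _) ⟨r, rfl, rfl⟩

theorem le_muNorm {p : ℝ} {m : X →₀ Y} {a : ℝ} (hm : ∃ r : MolRep X Y, r.mol = m)
    (h : ∀ r : MolRep X Y, r.mol = m → a ≤ r.cost p) : a ≤ muNorm p m := by
  rw [muNorm_eq_sInf_cost]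
  exact le_csInf (Set.Nonempty.image _ hm) (Set.forall_mem_image.2 h)

theorem muNorm_zero {p : ℝ} (hp : p ≠ 0) : muNorm p (0 : X →₀ Y) = 0 :=
  le_antisymm ((muNorm_mol_le_cost p MolRep.nil).trans_eq (MolRep.cost_nil hp))
    (muNorm_nonneg p 0)

theorem abs_lipPairing_mol_le_cost {p : ℝ} (hp : 1 ≤ p) {f : X → ℝ} (hf : LipschitzWith 1 f)
    (g : 𝔹) (r : MolRep X Y) :
    |lipPairing f g.1 r.mol| ≤ r.cost p := by
  have hdist (i) : |f (r.src i) - f (r.tgt i)| ≤ dist (r.src i) (r.tgt i) := by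
    simpa [Real.dist_eq] using hf.dist_le_mul (r.src i) (r.tgt i)
  rw [lipPairing_mol]
  calc |∑ i, r.coef i * ((f (r.src i) - f (r.tgt i)) * g.1 (r.vec i))|
      ≤ ∑ i, |r.coef i| * dist (r.src i) (r.tgt i) * |g.1 (r.vec i)| := by
        refine (Finset.abs_sum_le_sum_abs _ _).trans (Finset.sum_le_sum fun i _ => ?_)
        rw [abs_mul, abs_mul, ← mul_assoc]
        gcongr
        exact hdist i
    _ ≤ (∑ i, (|r.coef i| * dist (r.src i) (r.tgt i)) ^ p) ^ (1 / p) * weakFactor p r.vec :=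
        sum_mul_abs_le_weakFactor hp _ (fun i => by positivity) _ g
    _ = r.cost p := by
        simp only [MolRep.cost, MolRep.lpSum, Real.mul_rpow (abs_nonneg _) dist_nonneg]

theorem abs_lipPairing_le_muNorm {p : ℝ} (hp : 1 ≤ p) {f : X → ℝ} (hf : LipschitzWith 1 f)
    (g : 𝔹) {m : X →₀ Y} (hm : ∃ r : MolRep X Y, r.mol = m) :
    |lipPairing f g.1 m| ≤ muNorm p m :=
  le_muNorm hm fun r hr => hr ▸ abs_lipPairing_mol_le_cost hp hf g r

theorem eq_zero_of_muNorm_eq_zero {p : ℝ} (hp : 1 ≤ p) {m : X →₀ Y}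
    (hm : ∃ r : MolRep X Y, r.mol = m) (h : muNorm p m = 0) : m = 0 := by
  classical
  by_contra hne
  obtain ⟨a, ha⟩ := Finsupp.support_nonempty_iff.2 hne
  have hma := Finsupp.mem_support_iff.1 ha
  obtain ⟨g, hg, hga⟩ := exists_dual_vector ℝ (m a) (norm_ne_zero_iff.2 hma)
  obtain ⟨ε, hε, hball⟩ : ∃ ε > 0, Metric.ball a ε ⊆ (↑(m.support.erase a) : Set X)ᶜ :=
    Metric.isOpen_iff.1 (m.support.erase a).isClosed.isOpen_compl a (by simp)
  -- a bump of height `ε` at `a`, vanishing at the other points of the support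
  set f : X → ℝ := fun x => max (ε - dist x a) 0 with hf_def
  have hf : LipschitzWith 1 f := LipschitzWith.of_dist_le_mul fun x x' => by
    simpa [Real.dist_eq, abs_sub_comm (dist x' a)] using
      (abs_max_sub_max_le_abs (ε - dist x a) (ε - dist x' a) 0).trans
        (by simpa [abs_sub_comm] using abs_dist_sub_le x x' a)
  have hpair : lipPairing f g m = ε * ‖m a‖ := by
    rw [lipPairing_apply, Finsupp.sum, Finset.sum_eq_single_of_mem a ha]
    · simp [hf_def, hε.le, hga]
    · intro b hb hba
      have : ε ≤ dist b a := not_lt.1 fun hlt => hball hlt (Finset.mem_erase.2 ⟨hba, hb⟩)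
      simp [hf_def, this]
  have := abs_lipPairing_le_muNorm hp hf ⟨g, hg.le⟩ hm
  rw [h, hpair] at this
  exact (mul_pos hε (norm_pos_iff.2 hma)).not_ge ((le_abs_self _).trans this)

theorem MolRep.exists_lpSum_eq_cost {p : ℝ} (hp : 1 ≤ p) (r : MolRep X Y) (hr : 0 < r.cost p) :
    ∃ r' : MolRep X Y, r'.mol = r.mol ∧ r'.lpSum p = r.cost p ∧
      weakFactor p r'.vec ≤ r.cost p ^ (1 - 1 / p) := by
  have hp0 : p ≠ 0 := (zero_lt_one.trans_le hp).ne'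
  set c := r.cost p
  set s := r.lpSum p ^ (1 / p)
  set w := weakFactor p r.vec
  have hcsw : c = s * w := rfl
  have hsp : s ^ p = r.lpSum p := by
    rw [← Real.rpow_mul (r.lpSum_nonneg p), one_div_mul_cancel hp0, Real.rpow_one]
  have hs : 0 < s := (show 0 ≤ s from Real.rpow_nonneg (r.lpSum_nonneg p) _).lt_of_ne
    (by rintro h0; rw [hcsw, ← h0, zero_mul] at hr; exact hr.false)
  set t := c ^ (1 / p) / s
  have ht : 0 < t := by positivity
  refine ⟨(r.smulVec t⁻¹).smulCoef t, ?_, ?_, le_of_eq ?_⟩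
  · rw [mol_smulCoef, mol_smulVec, smul_smul, mul_inv_cancel₀ ht.ne', one_smul]
  · calc ((r.smulVec t⁻¹).smulCoef t).lpSum p = t ^ p * s ^ p := by
          rw [lpSum_smulCoef, abs_of_pos ht, hsp]
          rfl
      _ = c := by
          rw [← Real.mul_rpow ht.le hs.le, div_mul_cancel₀ _ hs.ne', one_div,
            Real.rpow_inv_rpow hr.le hp0]
  · calc weakFactor p (t⁻¹ • r.vec) = s * w / c ^ (1 / p) := by
          rw [weakFactor_smul hp0, abs_of_pos (inv_pos.2 ht), inv_div, div_mul_eq_mul_div]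
      _ = c ^ (1 - 1 / p) := by
          rw [Real.rpow_sub hr, Real.rpow_one, hcsw]

theorem MolRep.mol_eq_zero_of_cost_eq_zero {p : ℝ} (hp : 1 ≤ p) (r : MolRep X Y)
    (hr : r.cost p = 0) : r.mol = 0 :=
  eq_zero_of_muNorm_eq_zero hp ⟨r, rfl⟩
    (le_antisymm ((muNorm_mol_le_cost p r).trans_eq hr) (muNorm_nonneg p _))

theorem muNorm_mol_add_le {p : ℝ} (hp : 1 ≤ p) (r₁ r₂ : MolRep X Y) :
    muNorm p (r₁.mol + r₂.mol) ≤ r₁.cost p + r₂.cost p := by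
  rcases (r₁.cost_nonneg p).eq_or_lt with h₁ | h₁
  · rw [r₁.mol_eq_zero_of_cost_eq_zero hp h₁.symm, ← h₁, zero_add, zero_add]
    exact muNorm_mol_le_cost p r₂
  rcases (r₂.cost_nonneg p).eq_or_lt with h₂ | h₂
  · rw [r₂.mol_eq_zero_of_cost_eq_zero hp h₂.symm, ← h₂, add_zero, add_zero]
    exact muNorm_mol_le_cost p r₁
  obtain ⟨b₁, hb₁, hl₁, hw₁⟩ := r₁.exists_lpSum_eq_cost hp h₁
  obtain ⟨b₂, hb₂, hl₂, hw₂⟩ := r₂.exists_lpSum_eq_cost hp h₂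
  set c := r₁.cost p + r₂.cost p
  have hc : 0 < c := add_pos h₁ h₂
  calc muNorm p (r₁.mol + r₂.mol) = muNorm p (b₁.append b₂).mol := by
        rw [MolRep.mol_append, hb₁, hb₂]
    _ ≤ (b₁.append b₂).cost p := muNorm_mol_le_cost p _
    _ ≤ c ^ (1 / p) * c ^ (1 - 1 / p) := by
        rw [MolRep.cost, MolRep.lpSum_append, hl₁, hl₂]
        exact mul_le_mul_of_nonneg_left
          (weakFactor_append_le hp h₁.le h₂.le hw₁ hw₂) (by positivity)
    _ = c := by rw [← Real.rpow_add hc, add_sub_cancel, Real.rpow_one]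

theorem muNorm_add_le {p : ℝ} (hp : 1 ≤ p) {m₁ m₂ : X →₀ Y}
    (hm₁ : ∃ r : MolRep X Y, r.mol = m₁) (hm₂ : ∃ r : MolRep X Y, r.mol = m₂) :
    muNorm p (m₁ + m₂) ≤ muNorm p m₁ + muNorm p m₂ := by
  have hne₁ : (MolRep.cost p '' {r | r.mol = m₁}).Nonempty := Set.Nonempty.image _ hm₁
  have hne₂ : (MolRep.cost p '' {r | r.mol = m₂}).Nonempty := Set.Nonempty.image _ hm₂
  rw [muNorm_eq_sInf_cost p m₁, muNorm_eq_sInf_cost p m₂,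
    ← csInf_add hne₁ (bddBelow_cost_image p _) hne₂ (bddBelow_cost_image p _)]
  refine le_csInf (hne₁.add hne₂) ?_
  rintro _ ⟨_, ⟨r₁, rfl, rfl⟩, _, ⟨r₂, rfl, rfl⟩, rfl⟩
  exact muNorm_mol_add_le hp r₁ r₂

theorem cost_image_smul {p : ℝ} (hp : p ≠ 0) {α : ℝ} (hα : α ≠ 0) (m : X →₀ Y) :
    MolRep.cost p '' {r | r.mol = α • m} = |α| • MolRep.cost p '' {r | r.mol = m} := by
  ext c
  simp only [Set.mem_smul_set, Set.mem_image, Set.mem_ofPred_eq]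
  constructor
  · rintro ⟨r, hr, rfl⟩
    refine ⟨_, ⟨r.smulCoef α⁻¹, ?_, rfl⟩, ?_⟩
    · rw [MolRep.mol_smulCoef, hr, smul_smul, inv_mul_cancel₀ hα, one_smul]
    · rw [MolRep.cost_smulCoef hp, smul_eq_mul, ← mul_assoc, abs_inv,
        mul_inv_cancel₀ (abs_ne_zero.2 hα), one_mul]
  · rintro ⟨_, ⟨r, hr, rfl⟩, rfl⟩
    exact ⟨r.smulCoef α, by rw [MolRep.mol_smulCoef, hr], MolRep.cost_smulCoef hp α r⟩

theorem muNorm_smul {p : ℝ} (hp : p ≠ 0) (α : ℝ) (m : X →₀ Y) :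
    muNorm p (α • m) = |α| * muNorm p m := by
  rcases eq_or_ne α 0 with rfl | hα
  · rw [zero_smul, muNorm_zero hp, abs_zero, zero_mul]
  · rw [muNorm_eq_sInf_cost, muNorm_eq_sInf_cost, cost_image_smul hp hα,
      Real.sInf_smul_of_nonneg (abs_nonneg α), smul_eq_mul]

theorem muNorm_is_norm_general (p : ℝ) (hp : 1 ≤ p) :
    (∀ m ∈ MolSpace X Y, 0 ≤ muNorm p m) ∧
    (∀ m ∈ MolSpace X Y, muNorm p m = 0 → m = 0) ∧
    (∀ (α : ℝ), ∀ m ∈ MolSpace X Y, muNorm p (α • m) = |α| * muNorm p m) ∧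
    (∀ m₁ ∈ MolSpace X Y, ∀ m₂ ∈ MolSpace X Y,
      muNorm p (m₁ + m₂) ≤ muNorm p m₁ + muNorm p m₂) :=
  ⟨fun m _ => muNorm_nonneg p m,
    fun _ hm => eq_zero_of_muNorm_eq_zero hp (MolRep.exists_mol_eq hm),
    fun α m _ => muNorm_smul (zero_lt_one.trans_le hp).ne' α m,
    fun _ hm₁ _ hm₂ => muNorm_add_le hp (MolRep.exists_mol_eq hm₁) (MolRep.exists_mol_eq hm₂)⟩

/-- `μ_p` is a norm on the space of `Y`-valued molecules on `X`. -/
theorem muNorm_is_norm [CompleteSpace Y] (x0 : X) (p : ℝ) (hp : 1 ≤ p) :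
    (∀ m ∈ MolSpace X Y, 0 ≤ muNorm p m) ∧
    (∀ m ∈ MolSpace X Y, muNorm p m = 0 → m = 0) ∧
    (∀ (α : ℝ), ∀ m ∈ MolSpace X Y, muNorm p (α • m) = |α| * muNorm p m) ∧
    (∀ m₁ ∈ MolSpace X Y, ∀ m₂ ∈ MolSpace X Y,
      muNorm p (m₁ + m₂) ≤ muNorm p m₁ + muNorm p m₂) :=
  muNorm_is_norm_general p hp

end
end

section
/- (Ky Fan's Lemma) Let E be a Hausdorff topological real vector space and 𝒞 ⊆ E a nonempty compact convex subset. Let M be a set of functions from 𝒞 to (−∞, ∞] such that: (a) each f ∈ M is convex and lower semicontinuous on 𝒞; (b) for every finite convex combination g of elements of M there is an f ∈ M with g(x) ≤ f(x) for every x ∈ 𝒞; (c) there is r ∈ ℝ such that each f ∈ M attains a value not greater than r at some point of 𝒞. Then there exists x₀ ∈ 𝒞 such that f(x₀) ≤ r for all f ∈ M. -/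
/-!
By compactness of `𝒞` and lower semicontinuity it suffices to find, for finitely many
`g₁, …, gₙ ∈ M`, a point of `𝒞` where all `gᵢ ≤ r`. We add the `gᵢ` one at a time, shrinking a
compact convex set `D` to `D ∩ {g ≤ r}`; every `f ∈ M` still attains a value `≤ r` there by the
case of two functions `f, g`, applied to the element of `M` dominating `s f + (1 - s) g`.

For two functions `F, G`, suppose `{F ≤ r}` and `{G ≤ r}` are disjoint. Each sublevel set
`{s F + (1 - s) G ≤ r}`, `s ∈ [0, 1]`, is convex, hence connected, and lies in their union, so it
meets only one of them. This splits `[0, 1]` into two disjoint sets, containing `1` and `0`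
respectively, which are closed because `(s, x) ↦ s F x + (1 - s) G x` is jointly lower
semicontinuous on the compact set `[0, 1] × D`: this contradicts the connectedness of `[0, 1]`.
-/

open Set Filter

namespace WithTop

lemma exists_coe_between {α : Type*} [LinearOrder α] [DenselyOrdered α] [NoMaxOrder α] {z : α}
    {A : WithTop α} (h : (z : WithTop α) < A) : ∃ a : α, z < a ∧ (a : WithTop α) < A := by
  obtain ⟨w, hzw, hwA⟩ := exists_between h
  lift w to α using hwA.ne_top
  exact ⟨w, coe_lt_coe.1 hzw, hwA⟩

variable {α : Type*} [DecidableEq α]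

lemma coe_mul_add [NonUnitalNonAssocSemiring α] (c : α) (a b : WithTop α) :
    (c : WithTop α) * (a + b) = c * a + c * b := by
  rcases eq_or_ne c 0 with rfl | hc
  · simp
  induction a using WithTop.recTopCoe <;> induction b using WithTop.recTopCoe <;>
    simp [hc, ← coe_add, ← coe_mul, mul_add]

lemma coe_mul_le_coe_mul [MulZeroClass α] [PartialOrder α] [PosMulMono α] {c : α} (hc : 0 ≤ c)
    {a b : WithTop α} (h : a ≤ b) : (c : WithTop α) * a ≤ c * b := by
  rcases eq_or_ne c 0 with rfl | hc0
  · simp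
  induction b using WithTop.recTopCoe with
  | top => simp [hc0]
  | coe b =>
    lift a to α using ne_top_of_le_ne_top coe_ne_top h
    norm_cast at h ⊢
    exact mul_le_mul_of_nonneg_left h hc

end WithTop

lemma exists_lt_lt_of_coe_lt_add {y : ℝ} {A B : WithTop ℝ} (h : (y : WithTop ℝ) < A + B) :
    ∃ a b : ℝ, (a : WithTop ℝ) < A ∧ (b : WithTop ℝ) < B ∧ y < a + b := by
  induction A using WithTop.recTopCoe with
  | top =>
    induction B using WithTop.recTopCoe with
    | top => exact ⟨y, 1, WithTop.coe_lt_top _, WithTop.coe_lt_top _, by linarith⟩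
    | coe b =>
      exact ⟨y - b + 2, b - 1, WithTop.coe_lt_top _, WithTop.coe_lt_coe.2 (by linarith),
        by linarith⟩
  | coe a =>
    induction B using WithTop.recTopCoe with
    | top =>
      exact ⟨a - 1, y - a + 2, WithTop.coe_lt_coe.2 (by linarith), WithTop.coe_lt_top _,
        by linarith⟩
    | coe b =>
      have h : y < a + b := by exact_mod_cast h
      exact ⟨a - (a + b - y) / 3, b - (a + b - y) / 3, WithTop.coe_lt_coe.2 (by linarith),
        WithTop.coe_lt_coe.2 (by linarith), by linarith⟩

lemma exists_lt_of_coe_lt_coe_mul {c y : ℝ} (hc : 0 ≤ c) {A : WithTop ℝ}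
    (h : (y : WithTop ℝ) < c * A) : ∃ a : ℝ, (a : WithTop ℝ) < A ∧ y < c * a := by
  rcases hc.eq_or_lt with rfl | hc
  · obtain ⟨w, hw⟩ := exists_lt A
    lift w to ℝ using hw.ne_top
    exact ⟨w, hw, by simpa using h⟩
  have hyc : ((y / c : ℝ) : WithTop ℝ) < A := by
    induction A using WithTop.recTopCoe with
    | top => exact WithTop.coe_lt_top _
    | coe a => exact_mod_cast (div_lt_iff₀' hc).2 (by exact_mod_cast h)
  obtain ⟨a, hya, haA⟩ := WithTop.exists_coe_between hyc
  exact ⟨a, haA, (div_lt_iff₀' hc).1 hya⟩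

/-- Multiplication on `WithTop ℝ` has `0 * ⊤ = 0` but `c * ⊤ = ⊤` for every `c ≠ 0`. -/
noncomputable def convexComb (t : ℝ) (a b : WithTop ℝ) : WithTop ℝ :=
  (t : WithTop ℝ) * a + ((1 - t : ℝ) : WithTop ℝ) * b

section convexComb

variable {t : ℝ} {a b : WithTop ℝ}

@[simp] lemma convexComb_zero (a b : WithTop ℝ) : convexComb 0 a b = b := by simp [convexComb]

@[simp] lemma convexComb_one (a b : WithTop ℝ) : convexComb 1 a b = a := by simp [convexComb]

lemma convexComb_coe (t a b : ℝ) : convexComb t a b = ↑(t * a + (1 - t) * b) := by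
  simp [convexComb]

lemma convexComb_mono (ht : t ∈ Icc (0 : ℝ) 1) {a' b' : WithTop ℝ} (ha : a ≤ a') (hb : b ≤ b') :
    convexComb t a b ≤ convexComb t a' b' :=
  add_le_add (WithTop.coe_mul_le_coe_mul ht.1 ha)
    (WithTop.coe_mul_le_coe_mul (sub_nonneg.2 ht.2) hb)

lemma convexComb_self (ht : t ∈ Icc (0 : ℝ) 1) (a : WithTop ℝ) : convexComb t a a = a := by
  induction a using WithTop.recTopCoe with
  | top =>
    rcases eq_or_ne t 0 with rfl | ht0
    · simp
    · simp [convexComb, ht0]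
  | coe a => rw [convexComb_coe]; congr 1; ring

lemma min_le_convexComb (ht : t ∈ Icc (0 : ℝ) 1) (a b : WithTop ℝ) :
    min a b ≤ convexComb t a b := by
  rcases le_total a b with hab | hab
  · exact min_le_of_left_le ((convexComb_self ht a).ge.trans (convexComb_mono ht le_rfl hab))
  · exact min_le_of_right_le ((convexComb_self ht b).ge.trans (convexComb_mono ht hab le_rfl))

lemma convexComb_convexComb (s t : ℝ) (a b c d : WithTop ℝ) :
    convexComb s (convexComb t a b) (convexComb t c d) =
      convexComb t (convexComb s a c) (convexComb s b d) := by
  simp only [convexComb, WithTop.coe_mul_add]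
  ac_rfl

lemma exists_lt_lt_of_coe_lt_convexComb (ht : t ∈ Icc (0 : ℝ) 1) {y : ℝ}
    (h : (y : WithTop ℝ) < convexComb t a b) :
    ∃ a' b' : ℝ, (a' : WithTop ℝ) < a ∧ (b' : WithTop ℝ) < b ∧ y < t * a' + (1 - t) * b' := by
  obtain ⟨y₁, y₂, h₁, h₂, hy⟩ := exists_lt_lt_of_coe_lt_add h
  obtain ⟨a', ha, hy₁⟩ := exists_lt_of_coe_lt_coe_mul ht.1 h₁
  obtain ⟨b', hb, hy₂⟩ := exists_lt_of_coe_lt_coe_mul (sub_nonneg.2 ht.2) h₂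
  exact ⟨a', b', ha, hb, by linarith⟩

end convexComb

theorem LowerSemicontinuousOn.convexComb {X : Type*} [TopologicalSpace X] {S : Set X}
    {t : X → ℝ} {F G : X → WithTop ℝ} (ht : ContinuousOn t S) (ht01 : MapsTo t S (Icc 0 1))
    (hF : LowerSemicontinuousOn F S) (hG : LowerSemicontinuousOn G S) :
    LowerSemicontinuousOn (fun p => convexComb (t p) (F p) (G p)) S := by
  intro p hp y hy
  lift y to ℝ using hy.ne_top
  obtain ⟨a, b, ha, hb, hab⟩ := exists_lt_lt_of_coe_lt_convexComb (ht01 hp) hy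
  have hcont : ContinuousWithinAt (fun q => t q * a + (1 - t q) * b) S p :=
    ((ht p hp).mul continuousWithinAt_const).add
      ((continuousWithinAt_const.sub (ht p hp)).mul continuousWithinAt_const)
  filter_upwards [hF p hp a ha, hG p hp b hb, hcont.eventually_const_lt hab, self_mem_nhdsWithin]
    with q hFq hGq hq hqS
  calc (y : WithTop ℝ) < ↑(t q * a + (1 - t q) * b) := by exact_mod_cast hq
    _ = _root_.convexComb (t q) a b := (convexComb_coe _ _ _).symm
    _ ≤ _root_.convexComb (t q) (F q) (G q) := convexComb_mono (ht01 hqS) hFq.le hGq.le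

section ConvexOnWithTop

variable {E : Type*} [AddCommMonoid E] [SMul ℝ E]

def ConvexOnWithTop (s : Set E) (f : E → WithTop ℝ) : Prop :=
  ∀ x ∈ s, ∀ y ∈ s, ∀ t : ℝ, 0 ≤ t → t ≤ 1 → f (t • x + (1 - t) • y) ≤ convexComb t (f x) (f y)

variable {D D' : Set E} {f F G : E → WithTop ℝ}

lemma ConvexOnWithTop.subset (hf : ConvexOnWithTop D f) (h : D' ⊆ D) : ConvexOnWithTop D' f :=
  fun x hx y hy => hf x (h hx) y (h hy)

lemma ConvexOnWithTop.quasiconvexOn (hD : Convex ℝ D) (hf : ConvexOnWithTop D f) :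
    QuasiconvexOn ℝ D f := by
  intro r x hx y hy a b ha hb hab
  obtain rfl : b = 1 - a := by linarith
  refine ⟨hD hx.1 hy.1 ha hb hab, ?_⟩
  calc f (a • x + (1 - a) • y) ≤ convexComb a (f x) (f y) := hf x hx.1 y hy.1 a ha (by linarith)
    _ ≤ convexComb a r r := convexComb_mono ⟨ha, by linarith⟩ hx.2 hy.2
    _ = r := convexComb_self ⟨ha, by linarith⟩ r

lemma ConvexOnWithTop.convexComb (hF : ConvexOnWithTop D F) (hG : ConvexOnWithTop D G) {s : ℝ}
    (hs : s ∈ Icc (0 : ℝ) 1) : ConvexOnWithTop D fun x => convexComb s (F x) (G x) := by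
  intro x hx y hy t ht0 ht1
  rw [convexComb_convexComb]
  exact convexComb_mono hs (hF x hx y hy t ht0 ht1) (hG x hx y hy t ht0 ht1)

end ConvexOnWithTop

section TopologicalVectorSpace

variable {E : Type*} [AddCommGroup E] [Module ℝ E] [TopologicalSpace E] [IsTopologicalAddGroup E]
  [ContinuousSMul ℝ E] {D : Set E} {F G : E → WithTop ℝ} {r : WithTop ℝ}

open scoped Set.Notation in
lemma exists_le_and_le_of_convexComb_le (hD : Convex ℝ D) (hF : ConvexOnWithTop D F)
    (hG : ConvexOnWithTop D G) (hFl : LowerSemicontinuousOn F D)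
    (hGl : LowerSemicontinuousOn G D) {s : ℝ} (hs : s ∈ Icc (0 : ℝ) 1) {x y : E} (hx : x ∈ D)
    (hy : y ∈ D) (hxs : convexComb s (F x) (G x) ≤ r) (hFx : F x ≤ r)
    (hys : convexComb s (F y) (G y) ≤ r) (hGy : G y ≤ r) :
    ∃ z ∈ D, F z ≤ r ∧ G z ≤ r := by
  have hconn : IsPreconnected (D ↓∩ ((fun z => convexComb s (F z) (G z)) ⁻¹' Iic r)) :=
    ((hF.convexComb hG hs).quasiconvexOn hD).isPreconnected_preimage_subtype
  obtain ⟨z, -, hFz, hGz⟩ := isPreconnected_closed_iff.1 hconn _ _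
    ((lowerSemicontinuous_restrict_iff.2 hFl).isClosed_preimage r)
    ((lowerSemicontinuous_restrict_iff.2 hGl).isClosed_preimage r)
    (fun z hz => min_le_iff.1 ((min_le_convexComb hs _ _).trans hz))
    ⟨⟨x, hx⟩, hxs, hFx⟩ ⟨⟨y, hy⟩, hys, hGy⟩
  exact ⟨z, z.2, hFz, hGz⟩

lemma exists_le_and_le_of_forall_convexComb_le (hDc : IsCompact D) (hD : Convex ℝ D)
    (hF : ConvexOnWithTop D F) (hG : ConvexOnWithTop D G) (hFl : LowerSemicontinuousOn F D)
    (hGl : LowerSemicontinuousOn G D)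
    (h : ∀ s ∈ Icc (0 : ℝ) 1, ∃ x ∈ D, convexComb s (F x) (G x) ≤ r) :
    ∃ x ∈ D, F x ≤ r ∧ G x ≤ r := by
  by_contra! hFG
  set K := Icc (0 : ℝ) 1 ×ˢ D
  have hK : IsCompact K := isCompact_Icc.prod hDc
  have hFl' : LowerSemicontinuousOn (fun p : ℝ × E => F p.2) K :=
    hFl.comp continuous_snd.continuousOn fun p hp => hp.2
  have hGl' : LowerSemicontinuousOn (fun p : ℝ × E => G p.2) K :=
    hGl.comp continuous_snd.continuousOn fun p hp => hp.2
  have hΦ : LowerSemicontinuousOn (fun p : ℝ × E => convexComb p.1 (F p.2) (G p.2)) K :=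
    .convexComb continuous_fst.continuousOn (fun p hp => hp.1) hFl' hGl'
  -- the parameters `s` whose sublevel set meets `{F ≤ r}`, resp. `{G ≤ r}`
  set U := Prod.fst '' (K ∩ (fun p => convexComb p.1 (F p.2) (G p.2) ⊔ F p.2) ⁻¹' Iic r)
  set V := Prod.fst '' (K ∩ (fun p => convexComb p.1 (F p.2) (G p.2) ⊔ G p.2) ⁻¹' Iic r)
  have hU : IsClosed U :=
    ((hΦ.sup hFl').isCompact_inter_preimage_Iic hK r |>.image continuous_fst).isClosed
  have hV : IsClosed V :=
    ((hΦ.sup hGl').isCompact_inter_preimage_Iic hK r |>.image continuous_fst).isClosed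
  have hUV : Icc 0 1 ⊆ U ∪ V := by
    intro s hs
    obtain ⟨x, hx, hxs⟩ := h s hs
    rcases min_le_iff.1 ((min_le_convexComb hs _ _).trans hxs) with hFx | hGx
    · exact Or.inl ⟨(s, x), ⟨⟨hs, hx⟩, sup_le hxs hFx⟩, rfl⟩
    · exact Or.inr ⟨(s, x), ⟨⟨hs, hx⟩, sup_le hxs hGx⟩, rfl⟩
  have h1U : (1 : ℝ) ∈ U := by
    obtain ⟨x, hx, hx1⟩ := h 1 (right_mem_Icc.2 zero_le_one)
    exact ⟨(1, x), ⟨⟨right_mem_Icc.2 zero_le_one, hx⟩, sup_le hx1 (by simpa using hx1)⟩, rfl⟩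
  have h0V : (0 : ℝ) ∈ V := by
    obtain ⟨x, hx, hx0⟩ := h 0 (left_mem_Icc.2 zero_le_one)
    exact ⟨(0, x), ⟨⟨left_mem_Icc.2 zero_le_one, hx⟩, sup_le hx0 (by simpa using hx0)⟩, rfl⟩
  obtain ⟨s, hs, ⟨⟨_, x⟩, ⟨⟨-, hx⟩, hxs⟩, rfl⟩, ⟨⟨_, y⟩, ⟨⟨-, hy⟩, hys⟩, rfl⟩⟩ :=
    isPreconnected_closed_iff.1 isPreconnected_Icc U V hU hV hUV
      ⟨1, right_mem_Icc.2 zero_le_one, h1U⟩ ⟨0, left_mem_Icc.2 zero_le_one, h0V⟩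
  obtain ⟨z, hz, hFz, hGz⟩ := exists_le_and_le_of_convexComb_le hD hF hG hFl hGl hs hx hy
    (le_sup_left.trans hxs) (le_sup_right.trans hxs) (le_sup_left.trans hys)
    (le_sup_right.trans hys)
  exact (hFG z hz hFz).not_ge hGz

end TopologicalVectorSpace

section KyFan

variable {E : Type*} [AddCommGroup E] [Module ℝ E] [TopologicalSpace E] [IsTopologicalAddGroup E]
  [ContinuousSMul ℝ E] {C : Set E} {M : Set (E → WithTop ℝ)} {r : WithTop ℝ}

lemma exists_forall_mem_finset_le (hconvex : ∀ f ∈ M, ConvexOnWithTop C f)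
    (hlsc : ∀ f ∈ M, LowerSemicontinuousOn f C)
    (hdom : ∀ f ∈ M, ∀ g ∈ M, ∀ s ∈ Icc (0 : ℝ) 1, ∃ h ∈ M, ∀ x ∈ C,
      convexComb s (f x) (g x) ≤ h x)
    (u : Finset M) {D : Set E} (hDC : D ⊆ C) (hne : D.Nonempty) (hDc : IsCompact D)
    (hD : Convex ℝ D) (hr : ∀ f ∈ M, ∃ x ∈ D, f x ≤ r) :
    ∃ x ∈ D, ∀ g ∈ u, (g : E → WithTop ℝ) x ≤ r := by
  classical
  induction u using Finset.induction_on generalizing D with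
  | empty => exact hne.imp fun x hx => ⟨hx, by simp⟩
  | insert g u _ ih =>
    have hr' : ∀ f ∈ M, ∃ x ∈ D ∩ g ⁻¹' Iic r, f x ≤ r := by
      intro f hf
      obtain ⟨x, hx, hfx, hgx⟩ := exists_le_and_le_of_forall_convexComb_le hDc hD
        ((hconvex f hf).subset hDC) ((hconvex g g.2).subset hDC) ((hlsc f hf).mono hDC)
        ((hlsc g g.2).mono hDC) fun s hs => by
          obtain ⟨h, hh, hfgh⟩ := hdom f hf g g.2 s hs
          obtain ⟨x, hx, hhx⟩ := hr h hh
          exact ⟨x, hx, (hfgh x (hDC hx)).trans hhx⟩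
      exact ⟨x, ⟨hx, hgx⟩, hfx⟩
    obtain ⟨x, ⟨hxD, hgx⟩, hx⟩ := ih (inter_subset_left.trans hDC)
      (let ⟨x, hx, _⟩ := hr' g g.2; ⟨x, hx⟩)
      (((hlsc g g.2).mono hDC).isCompact_inter_preimage_Iic hDc r)
      (((hconvex g g.2).subset hDC).quasiconvexOn hD r) hr'
    exact ⟨x, hxD, (Finset.forall_mem_insert _ _ _).2 ⟨hgx, hx⟩⟩

end KyFan

theorem kyFan_lemma_general {E : Type*} [AddCommGroup E] [Module ℝ E] [TopologicalSpace E]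
    [IsTopologicalAddGroup E] [ContinuousSMul ℝ E]
    {C : Set E} (hne : C.Nonempty) (hcomp : IsCompact C) (hconv : Convex ℝ C)
    (M : Set (E → WithTop ℝ))
    -- (a) each `f ∈ M` is convex and lower semicontinuous on `𝒞`
    (hconvex : ∀ f ∈ M, ∀ x ∈ C, ∀ y ∈ C, ∀ t : ℝ, 0 ≤ t → t ≤ 1 →
      f (t • x + (1 - t) • y) ≤ (t : WithTop ℝ) * f x + ((1 - t : ℝ) : WithTop ℝ) * f y)
    (hlsc : ∀ f ∈ M, LowerSemicontinuousOn f C)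
    -- (b) every finite convex combination of elements of `M` is dominated on `𝒞`
    -- by some element of `M`
    (hdom : ∀ (k : ℕ) (t : Fin k → ℝ) (F : Fin k → E → WithTop ℝ),
      (∀ j, 0 ≤ t j) → (∑ j, t j) = 1 → (∀ j, F j ∈ M) →
      ∃ f ∈ M, ∀ x ∈ C, (∑ j, ((t j : WithTop ℝ) * F j x)) ≤ f x)
    -- (c) there is `r ∈ ℝ` such that each `f ∈ M` has a value not greater than `r`
    (r : ℝ) (hr : ∀ f ∈ M, ∃ x ∈ C, f x ≤ (r : WithTop ℝ)) :
    ∃ x₀ ∈ C, ∀ f ∈ M, f x₀ ≤ (r : WithTop ℝ) := by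
  have hdom₂ : ∀ f ∈ M, ∀ g ∈ M, ∀ s ∈ Icc (0 : ℝ) 1, ∃ h ∈ M, ∀ x ∈ C,
      convexComb s (f x) (g x) ≤ h x := fun f hf g hg s hs => by
    simpa [Fin.sum_univ_two, convexComb] using hdom 2 ![s, 1 - s] ![f, g]
      (Fin.forall_fin_two.2 ⟨hs.1, sub_nonneg.2 hs.2⟩) (by simp) (Fin.forall_fin_two.2 ⟨hf, hg⟩)
  by_contra! hcon
  have hempty : C ∩ ⋂ f ∈ M, f ⁻¹' Iic (r : WithTop ℝ) = ∅ :=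
    eq_empty_iff_forall_notMem.2 fun x ⟨hxC, hx⟩ =>
      let ⟨f, hf, hfx⟩ := hcon x hxC
      hfx.not_ge (mem_iInter₂.1 hx f hf)
  obtain ⟨u, hu⟩ := (LowerSemicontinuousOn.inter_biInter_preimage_Iic_eq_empty_iff_exists_finset
    hcomp hlsc).1 hempty
  obtain ⟨x, hxC, hx⟩ := exists_forall_mem_finset_le hconvex hlsc hdom₂ u subset_rfl hne hcomp hconv hr
  obtain ⟨g, hg, hgx⟩ := hu x hxC
  exact hgx.not_ge (hx g hg)

/-- **Ky Fan's Lemma.** -/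
theorem kyFan_lemma {E : Type*} [AddCommGroup E] [Module ℝ E] [TopologicalSpace E]
    [IsTopologicalAddGroup E] [ContinuousSMul ℝ E] [T2Space E]
    {C : Set E} (hne : C.Nonempty) (hcomp : IsCompact C) (hconv : Convex ℝ C)
    (M : Set (E → WithTop ℝ))
    -- (a) each `f ∈ M` is convex and lower semicontinuous on `𝒞`
    (hconvex : ∀ f ∈ M, ∀ x ∈ C, ∀ y ∈ C, ∀ t : ℝ, 0 ≤ t → t ≤ 1 →
      f (t • x + (1 - t) • y) ≤ (t : WithTop ℝ) * f x + ((1 - t : ℝ) : WithTop ℝ) * f y)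
    (hlsc : ∀ f ∈ M, LowerSemicontinuousOn f C)
    -- (b) every finite convex combination of elements of `M` is dominated on `𝒞`
    -- by some element of `M`
    (hdom : ∀ (k : ℕ) (t : Fin k → ℝ) (F : Fin k → E → WithTop ℝ),
      (∀ j, 0 ≤ t j) → (∑ j, t j) = 1 → (∀ j, F j ∈ M) →
      ∃ f ∈ M, ∀ x ∈ C, (∑ j, ((t j : WithTop ℝ) * F j x)) ≤ f x)
    -- (c) there is `r ∈ ℝ` such that each `f ∈ M` has a value not greater than `r`
    (r : ℝ) (hr : ∀ f ∈ M, ∃ x ∈ C, f x ≤ (r : WithTop ℝ)) :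
    ∃ x₀ ∈ C, ∀ f ∈ M, f x₀ ≤ (r : WithTop ℝ) :=
  kyFan_lemma_general hne hcomp hconv M hconvex hlsc hdom r hr
end

section
/- Let X be a pointed metric space, Y a real Banach space, 1 ≤ p < ∞, and let (ℱ(X), δ_X) be a Lipschitz-free space over X. Let T : X → Y be a Lipschitz map with T(0) = 0 and let T̂ : ℱ(X) → Y be its linearization. If T̂ is a p-summing linear operator, then T is Lipschitz p-summing, with π_p^L(T) ≤ π_p(T̂). -/
/-!
Weight the increments: for `λᵢ ≥ 0` put `yᵢ = λᵢ^{1/p} (δ xᵢ − δ xᵢ')` in `ℱ(X)`. Then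
`‖T̂ yᵢ‖^p = λᵢ ‖T xᵢ − T xᵢ'‖^p`, and for `‖g‖ ≤ 1` in `ℱ(X)*` the function `g ∘ δ` lies in
`B_{X^#}` because `δ` is an isometry, so `Σ |g yᵢ|^p = Σ λᵢ |(g ∘ δ)(xᵢ) − (g ∘ δ)(xᵢ')|^p`
is bounded by the Lipschitz supremum. The `p`-summing inequality for `T̂` on the `yᵢ`,
raised to the power `p`, is then the Lipschitz `p`-summing inequality for `T` with the same
constant.
-/

open scoped BigOperators NNReal

noncomputable section

universe u v w

/-- The (least) Lipschitz constant of a map. -/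
def lipConst {α : Type*} {β : Type*} [PseudoMetricSpace α] [PseudoMetricSpace β]
    (g : α → β) : ℝ≥0 :=
  sInf {K : ℝ≥0 | LipschitzWith K g}

/-- `(F, δ)` is a Lipschitz-free space over the pointed metric space `(X, x0)`. -/
def IsFreeSpace {X : Type u} [MetricSpace X] (x0 : X) {F : Type v}
    [NormedAddCommGroup F] [NormedSpace ℝ F] [CompleteSpace F] (δ : X → F) : Prop :=
  (∀ x x' : X, dist (δ x) (δ x') = dist x x') ∧
  δ x0 = 0 ∧
  Dense (Submodule.span ℝ (Set.range δ) : Set F) ∧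
  ∀ (Z : Type w) [NormedAddCommGroup Z] [NormedSpace ℝ Z] [CompleteSpace Z],
    ∀ g : X → Z, (∃ K : ℝ≥0, LipschitzWith K g) → g x0 = 0 →
      ∃! ghat : F →L[ℝ] Z, (∀ x, ghat (δ x) = g x) ∧ ‖ghat‖ = (lipConst g : ℝ)

/-- The closed unit ball `B_{X^#}` of the space of Lipschitz functions `X → ℝ`
vanishing at the base point, normed by the Lipschitz constant. -/
def lipBall (X : Type*) [MetricSpace X] (x0 : X) : Set (X → ℝ) :=
  {f | LipschitzWith 1 f ∧ f x0 = 0}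

/-- `T` is Lipschitz `p`-summing with constant `C`:
`Σ_i λ_i d(T(x_i), T(x_i'))^p ≤ C^p · sup_{f ∈ B_{X^#}} Σ_i λ_i |f(x_i) − f(x_i')|^p`
for all finite families with `λ_i ≥ 0`. -/
def LipPSummingCond {X : Type*} [MetricSpace X] {Y : Type*} [PseudoMetricSpace Y]
    (p : ℝ) (x0 : X) (T : X → Y) (C : ℝ) : Prop :=
  ∀ (n : ℕ) (x x' : Fin n → X) (lam : Fin n → ℝ), (∀ i, 0 ≤ lam i) →
    ∑ i, lam i * dist (T (x i)) (T (x' i)) ^ p ≤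
      C ^ p * ⨆ f : lipBall X x0, ∑ i, lam i * |f.1 (x i) - f.1 (x' i)| ^ p

/-- `u` is `p`-summing with constant `C`:
`(Σ_i ‖u(x_i)‖^p)^{1/p} ≤ C · sup_{x* ∈ B_{E*}} (Σ_i |x*(x_i)|^p)^{1/p}`. -/
def PSummingCond {E F : Type*} [NormedAddCommGroup E] [NormedSpace ℝ E]
    [NormedAddCommGroup F] [NormedSpace ℝ F] (p : ℝ) (u : E →L[ℝ] F) (C : ℝ) : Prop :=
  ∀ (n : ℕ) (x : Fin n → E),
    (∑ i, ‖u (x i)‖ ^ p) ^ (1 / p) ≤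
      C * ⨆ g : {g : E →L[ℝ] ℝ // ‖g‖ ≤ 1}, (∑ i, |g.1 (x i)| ^ p) ^ (1 / p)

theorem norm_rpow_inv_smul_rpow {E : Type*} [SeminormedAddCommGroup E] [NormedSpace ℝ E]
    {p a : ℝ} (hp : p ≠ 0) (ha : 0 ≤ a) (v : E) :
    ‖a ^ (1 / p) • v‖ ^ p = a * ‖v‖ ^ p := by
  rw [norm_smul, Real.norm_of_nonneg (Real.rpow_nonneg ha _),
    Real.mul_rpow (Real.rpow_nonneg ha _) (norm_nonneg _), one_div, Real.rpow_inv_rpow ha hp]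

theorem PSummingCond.sum_mul_norm_rpow_le {E F : Type*} [NormedAddCommGroup E]
    [NormedSpace ℝ E] [NormedAddCommGroup F] [NormedSpace ℝ F] {p C B : ℝ} {u : E →L[ℝ] F}
    (hu : PSummingCond p u C) (hp : 0 < p) (hC : 0 ≤ C) (hB : 0 ≤ B)
    {n : ℕ} (v : Fin n → E) (lam : Fin n → ℝ) (hlam : ∀ i, 0 ≤ lam i)
    (hbound : ∀ g : E →L[ℝ] ℝ, ‖g‖ ≤ 1 → ∑ i, lam i * |g (v i)| ^ p ≤ B) :
    ∑ i, lam i * ‖u (v i)‖ ^ p ≤ C ^ p * B := by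
  set y : Fin n → E := fun i => lam i ^ (1 / p) • v i
  have hnorm_y : ∑ i, ‖u (y i)‖ ^ p = ∑ i, lam i * ‖u (v i)‖ ^ p := by
    simp only [y, map_smul, norm_rpow_inv_smul_rpow hp.ne' (hlam _)]
  have hdual_y : ∀ g : E →L[ℝ] ℝ, ∑ i, |g (y i)| ^ p = ∑ i, lam i * |g (v i)| ^ p := by
    intro g
    simp only [y, map_smul, ← Real.norm_eq_abs, norm_rpow_inv_smul_rpow hp.ne' (hlam _)]
  have hsup : ⨆ g : {g : E →L[ℝ] ℝ // ‖g‖ ≤ 1}, (∑ i, |g.1 (y i)| ^ p) ^ (1 / p) ≤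
      B ^ (1 / p) := by
    have : Nonempty {g : E →L[ℝ] ℝ // ‖g‖ ≤ 1} := ⟨⟨0, by simp⟩⟩
    refine ciSup_le fun g => Real.rpow_le_rpow ?_ ?_ (by positivity)
    · exact Finset.sum_nonneg fun i _ => by positivity
    · rw [hdual_y]; exact hbound g.1 g.2
  have hsum_nonneg : 0 ≤ ∑ i, lam i * ‖u (v i)‖ ^ p :=
    Finset.sum_nonneg fun i _ => mul_nonneg (hlam i) (by positivity)
  have hroot : (∑ i, lam i * ‖u (v i)‖ ^ p) ^ p⁻¹ ≤ C * B ^ p⁻¹ := by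
    simpa only [hnorm_y, one_div] using
      (hu n y).trans (mul_le_mul_of_nonneg_left hsup hC)
  rwa [Real.rpow_inv_le_iff_of_pos hsum_nonneg (by positivity) hp,
    Real.mul_rpow hC (by positivity), Real.rpow_inv_rpow hB hp.ne'] at hroot

section

variable {X : Type*} [MetricSpace X] {x0 : X}

theorem LipschitzWith.comp_mem_lipBall {F : Type*} [NormedAddCommGroup F] [NormedSpace ℝ F]
    {δ : X → F} (hδ : LipschitzWith 1 δ) (hδ0 : δ x0 = 0) {g : F →L[ℝ] ℝ} (hg : ‖g‖ ≤ 1) :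
    g ∘ δ ∈ lipBall X x0 := by
  refine ⟨?_, by simp [hδ0]⟩
  simpa using (g.lipschitz.weaken (K' := 1) (by exact_mod_cast hg)).comp hδ

theorem bddAbove_range_lipBall_sum {p : ℝ} (hp : 0 ≤ p) {n : ℕ} (x x' : Fin n → X)
    {lam : Fin n → ℝ} (hlam : ∀ i, 0 ≤ lam i) :
    BddAbove (Set.range fun f : lipBall X x0 => ∑ i, lam i * |f.1 (x i) - f.1 (x' i)| ^ p) := by
  refine ⟨∑ i, lam i * dist (x i) (x' i) ^ p, ?_⟩
  rintro _ ⟨f, rfl⟩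
  refine Finset.sum_le_sum fun i _ => mul_le_mul_of_nonneg_left ?_ (hlam i)
  refine Real.rpow_le_rpow (abs_nonneg _) ?_ hp
  simpa [Real.dist_eq] using f.2.1.dist_le_mul (x i) (x' i)

theorem lipPSummingCond_of_pSummingCond {Y F : Type*} [NormedAddCommGroup Y] [NormedSpace ℝ Y]
    [NormedAddCommGroup F] [NormedSpace ℝ F] {p C : ℝ} (hp : 0 < p) (hC : 0 ≤ C)
    {δ : X → F} (hδ : LipschitzWith 1 δ) (hδ0 : δ x0 = 0)
    {T : X → Y} {u : F →L[ℝ] Y} (hu : ∀ x, u (δ x) = T x) (hps : PSummingCond p u C) :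
    LipPSummingCond p x0 T C := by
  intro n x x' lam hlam
  have hB : 0 ≤ ⨆ f : lipBall X x0, ∑ i, lam i * |f.1 (x i) - f.1 (x' i)| ^ p :=
    Real.iSup_nonneg fun f => Finset.sum_nonneg fun i _ => mul_nonneg (hlam i) (by positivity)
  have key := hps.sum_mul_norm_rpow_le hp hC hB (fun i => δ (x i) - δ (x' i)) lam hlam
    fun g hg => by
      simpa only [map_sub, Function.comp_apply] using
        le_ciSup (bddAbove_range_lipBall_sum hp.le x x' hlam) ⟨g ∘ δ, hδ.comp_mem_lipBall hδ0 hg⟩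
  simpa only [map_sub, hu, dist_eq_norm] using key

end

theorem lipPSumming_of_linearization_general {X : Type u} [MetricSpace X] (x0 : X)
    {Y : Type v} [NormedAddCommGroup Y] [NormedSpace ℝ Y]
    {F : Type v} [NormedAddCommGroup F] [NormedSpace ℝ F] [CompleteSpace F]
    (p : ℝ) (hp : 1 ≤ p)
    (δ : X → F) (hfree : IsFreeSpace.{u, v, v} x0 δ)
    (T : X → Y)
    (That : F →L[ℝ] Y) (hThat : ∀ x, That (δ x) = T x)
    (hps : ∃ C > 0, PSummingCond p That C) :
    (∃ C > 0, LipPSummingCond p x0 T C) ∧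
    sInf {C : ℝ | 0 < C ∧ LipPSummingCond p x0 T C} ≤
      sInf {C : ℝ | 0 < C ∧ PSummingCond p That C} := by
  have hδ : LipschitzWith 1 δ := (Isometry.of_dist_eq hfree.1).lipschitz
  have transfer : ∀ C > 0, PSummingCond p That C → LipPSummingCond p x0 T C :=
    fun C hC hC_ps => lipPSummingCond_of_pSummingCond (by linarith) hC.le hδ hfree.2.1 hThat hC_ps
  obtain ⟨C, hC, hC_ps⟩ := hps
  refine ⟨⟨C, hC, transfer C hC hC_ps⟩, ?_⟩
  exact csInf_le_csInf ⟨0, fun D hD => hD.1.le⟩ ⟨C, hC, hC_ps⟩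
    fun D ⟨hD, hD_ps⟩ => ⟨hD, transfer D hD hD_ps⟩

/-- If the linearization `T̂` is `p`-summing then `T` is Lipschitz
`p`-summing, with `π_p^L(T) ≤ π_p(T̂)`. -/
theorem lipPSumming_of_linearization {X : Type u} [MetricSpace X] (x0 : X)
    {Y : Type v} [NormedAddCommGroup Y] [NormedSpace ℝ Y] [CompleteSpace Y]
    {F : Type v} [NormedAddCommGroup F] [NormedSpace ℝ F] [CompleteSpace F]
    (p : ℝ) (hp : 1 ≤ p)
    (δ : X → F) (hfree : IsFreeSpace.{u, v, v} x0 δ)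
    (T : X → Y) (K : ℝ≥0) (hT : LipschitzWith K T) (hT0 : T x0 = 0)
    (That : F →L[ℝ] Y) (hThat : ∀ x, That (δ x) = T x)
    (hps : ∃ C > 0, PSummingCond p That C) :
    (∃ C > 0, LipPSummingCond p x0 T C) ∧
    sInf {C : ℝ | 0 < C ∧ LipPSummingCond p x0 T C} ≤
      sInf {C : ℝ | 0 < C ∧ PSummingCond p That C} :=
  lipPSumming_of_linearization_general x0 p hp δ hfree T That hThat hps

end
end

section
/- Let 1 ≤ p < ∞ and let (ℱ(ℝ), δ_ℝ) be a Lipschitz-free space over ℝ (pointed at 0). Then the map δ_ℝ : ℝ → ℱ(ℝ) is Lipschitz p-summing, but its linearization, the identity operator on ℱ(ℝ), is not p-summing. In particular, a Lipschitz map can be Lipschitz p-summing while its linearization fails to be p-summing. -/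
/-!
The map `δ` is an isometry and the identity of `ℝ` lies in `B_{ℝ^#}`, so the supremum in the
Lipschitz `p`-summing inequality already dominates
`Σ λ_i |x_i - x_i'|^p = Σ λ_i ‖δ x_i - δ x_i'‖^p`.

For the identity, let `r_k(j) = (-1)^(bit k of j)` and
`x_k = Σ_{j < 2^n} r_k(j) (δ((j+1)/2^n) - δ(j/2^n))` for `k < n` (the `k`-th Rademacher function
under `ℱ(ℝ) ≅ L¹`). The linearization of a 1-Lipschitz function with slope `r_k(j)` on the `j`-th
dyadic interval takes the value `1` at `x_k`, so `‖x_k‖ ≥ 1`. For `‖g‖ ≤ 1`, `g(x_k)` is the inner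
product of `r_k` with the increments of the 1-Lipschitz function `g ∘ δ`, each at most `2^{-n}`;
the `r_k` are orthogonal of squared length `2^n`, so Bessel's inequality gives
`Σ_k g(x_k)^2 ≤ 1`, hence `Σ_k |g(x_k)|^p ≤ √n`. A constant `C` with `n^{1/p} ≤ C n^{1/(2p)}`
for all `n` cannot exist.
-/

open scoped BigOperators NNReal

noncomputable section

universe u v w

open Finset RealInnerProductSpace

def rademacher (k j : ℕ) : ℝ := if j.testBit k then -1 else 1

lemma abs_rademacher (k j : ℕ) : |rademacher k j| = 1 := by
  unfold rademacher; split_ifs <;> norm_num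

lemma rademacher_mul_self (k j : ℕ) : rademacher k j * rademacher k j = 1 := by
  rw [← abs_mul_self, abs_mul, abs_rademacher, one_mul]

lemma rademacher_xor_two_pow (k k' j : ℕ) :
    rademacher k (j ^^^ 2 ^ k') = if k' = k then -rademacher k j else rademacher k j := by
  unfold rademacher
  rw [Nat.testBit_xor, Nat.testBit_two_pow]
  by_cases h : k' = k <;> by_cases hj : j.testBit k <;> simp [h, hj]

lemma sum_rademacher_mul_rademacher_of_ne {n k k' : ℕ} (hkk' : k ≠ k') (hk' : k' < n) :
    ∑ j ∈ range (2 ^ n), rademacher k j * rademacher k' j = 0 := by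
  have hmem : ∀ j ∈ range (2 ^ n), j ^^^ 2 ^ k' ∈ range (2 ^ n) := fun j hj =>
    mem_range.2 (Nat.xor_lt_two_pow (mem_range.1 hj) (Nat.pow_lt_pow_right one_lt_two hk'))
  refine sum_involution (fun j _ => j ^^^ 2 ^ k') (fun j _ => ?_) (fun j _ _ => ?_) hmem
    (fun j _ => by simp)
  · rw [rademacher_xor_two_pow, rademacher_xor_two_pow, if_neg hkk'.symm, if_pos rfl]
    ring
  · intro h
    simpa [Nat.testBit_xor] using congrArg (·.testBit k') h

lemma sum_rademacher_mul_rademacher {n k k' : ℕ} (hk' : k' < n) :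
    ∑ j ∈ range (2 ^ n), rademacher k j * rademacher k' j = if k = k' then 2 ^ n else 0 := by
  split_ifs with h
  · simp [h, rademacher_mul_self]
  · exact sum_rademacher_mul_rademacher_of_ne h hk'

lemma sum_inner_sq_le_of_orthogonal {ι E : Type*} [NormedAddCommGroup E] [InnerProductSpace ℝ E]
    [DecidableEq ι] {N : ℝ} (hN : 0 < N) {w : ι → E}
    (hw : ∀ i j, ⟪w i, w j⟫ = if i = j then N else 0) (s : Finset ι) (x : E) :
    ∑ i ∈ s, ⟪w i, x⟫ ^ 2 ≤ N * ‖x‖ ^ 2 := by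
  have hsN : √N ^ 2 = N := Real.sq_sqrt hN.le
  have hv : Orthonormal ℝ fun i => (√N)⁻¹ • w i := by
    rw [orthonormal_iff_ite]
    intro i j
    rw [real_inner_smul_left, real_inner_smul_right, hw]
    split_ifs
    · field_simp; exact hsN.symm
    · simp
  have := hv.sum_inner_products_le x (s := s)
  simp only [real_inner_smul_left, Real.norm_eq_abs, sq_abs, mul_pow, inv_pow, hsN,
    ← Finset.mul_sum] at this
  rwa [inv_mul_le_iff₀ hN] at this

lemma abs_sum_range_sub_sum_range_le {c : ℕ → ℝ} (hc : ∀ j, |c j| ≤ 1) (i j : ℕ) :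
    |∑ l ∈ range j, c l - ∑ l ∈ range i, c l| ≤ |(j : ℝ) - i| := by
  wlog hij : i ≤ j generalizing i j
  · rw [abs_sub_comm, abs_sub_comm (j : ℝ)]
    exact this j i (by omega)
  rw [← sum_Ico_eq_sub _ hij, abs_of_nonneg (a := (j : ℝ) - i) (by simpa using hij)]
  calc |∑ l ∈ Ico i j, c l| ≤ ∑ l ∈ Ico i j, |c l| := abs_sum_le_sum_abs _ _
    _ ≤ ∑ l ∈ Ico i j, 1 := sum_le_sum fun l _ => hc l
    _ = (j : ℝ) - i := by simp [Nat.cast_sub hij]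

lemma exists_lipschitzWith_one_increments {c : ℕ → ℝ} (hc : ∀ j, |c j| ≤ 1) {m : ℝ} (hm : 0 < m) :
    ∃ φ : ℝ → ℝ, LipschitzWith 1 φ ∧ φ 0 = 0 ∧ ∀ j : ℕ, φ ((j + 1) / m) - φ (j / m) = c j / m := by
  set f : ℝ → ℝ := fun t => (∑ l ∈ range ⌊t * m⌋₊, c l) / m
  have hf : ∀ j : ℕ, f (j / m) = (∑ l ∈ range j, c l) / m := fun j => by
    simp [f, div_mul_cancel₀ _ hm.ne']
  have hlip : LipschitzOnWith 1 f (Set.range fun j : ℕ => (j : ℝ) / m) := by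
    refine LipschitzOnWith.of_dist_le_mul ?_
    rintro - ⟨j, rfl⟩ - ⟨i, rfl⟩
    rw [hf, hf, Real.dist_eq, Real.dist_eq, ← sub_div, ← sub_div, abs_div, abs_div,
      abs_of_pos hm, NNReal.coe_one, one_mul]
    exact div_le_div_of_nonneg_right (abs_sum_range_sub_sum_range_le hc i j) hm.le
  obtain ⟨φ, hφ, hφf⟩ := hlip.extend_real
  have hφ_grid : ∀ j : ℕ, φ (j / m) = (∑ l ∈ range j, c l) / m := fun j =>
    (hφf ⟨j, rfl⟩).symm.trans (hf j)
  refine ⟨φ, hφ, by simpa using hφ_grid 0, fun j => ?_⟩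
  rw [← Nat.cast_add_one, hφ_grid, hφ_grid, ← sub_div, sum_range_succ_sub_sum]

def rademacherSum {E : Type*} [AddCommGroup E] [Module ℝ E] (n k : ℕ) (ψ : ℝ → E) : E :=
  ∑ j ∈ range (2 ^ n), rademacher k j • (ψ ((j + 1) / 2 ^ n) - ψ (j / 2 ^ n))

lemma map_rademacherSum {E G L : Type*} [AddCommGroup E] [Module ℝ E] [AddCommGroup G]
    [Module ℝ G] [FunLike L E G] [LinearMapClass L ℝ E G] (g : L) (n k : ℕ) (ψ : ℝ → E) :
    g (rademacherSum n k ψ) = rademacherSum n k (g ∘ ψ) := by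
  simp only [rademacherSum, map_sum, map_smul, map_sub, Function.comp_apply]

lemma sum_sq_rademacherSum_le {ψ : ℝ → ℝ} (hψ : LipschitzWith 1 ψ) (n : ℕ) :
    ∑ k : Fin n, rademacherSum n k ψ ^ 2 ≤ 1 := by
  set N : ℝ := 2 ^ n with hN_def
  have hN : 0 < N := by positivity
  let w : Fin n → EuclideanSpace ℝ (Fin (2 ^ n)) := fun k => WithLp.toLp 2 fun j => rademacher k j
  let a : EuclideanSpace ℝ (Fin (2 ^ n)) :=
    WithLp.toLp 2 fun j => ψ ((j + 1) / N) - ψ (j / N)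
  have hw : ∀ k k', ⟪w k, w k'⟫ = if k = k' then N else 0 := fun k k' => by
    simp only [w, PiLp.inner_apply, RCLike.inner_apply, conj_trivial]
    rw [Fin.sum_univ_eq_sum_range (fun j => rademacher k' j * rademacher k j),
      sum_rademacher_mul_rademacher k.2]
    simp [Fin.val_inj, eq_comm, N]
  have hwa : ∀ k, ⟪w k, a⟫ = rademacherSum n k ψ := fun k => by
    simp only [w, a, PiLp.inner_apply, RCLike.inner_apply, conj_trivial, rademacherSum]
    rw [Fin.sum_univ_eq_sum_range (fun j => (ψ ((j + 1) / N) - ψ (j / N)) * rademacher k j)]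
    simp [mul_comm, N]
  have ha : ‖a‖ ^ 2 ≤ N⁻¹ := by
    have hincr : ∀ j : Fin (2 ^ n), ‖a j‖ ^ 2 ≤ (N⁻¹) ^ 2 := fun j => by
      have := hψ.dist_le_mul ((j + 1) / N) (j / N)
      rw [NNReal.coe_one, one_mul, Real.dist_eq, Real.dist_eq, ← sub_div, add_sub_cancel_left,
        abs_of_pos (one_div_pos.2 hN), one_div] at this
      exact pow_le_pow_left₀ (norm_nonneg _) this 2
    calc ‖a‖ ^ 2 = ∑ j, ‖a j‖ ^ 2 := EuclideanSpace.norm_sq_eq a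
      _ ≤ ∑ _j : Fin (2 ^ n), (N⁻¹) ^ 2 := sum_le_sum fun j _ => hincr j
      _ = N⁻¹ := by
        rw [sum_const, card_univ, Fintype.card_fin, nsmul_eq_mul, Nat.cast_pow, Nat.cast_ofNat]
        field_simp
        exact hN_def.symm
  calc ∑ k : Fin n, rademacherSum n k ψ ^ 2 = ∑ k, ⟪w k, a⟫ ^ 2 := by simp only [hwa]
    _ ≤ N * ‖a‖ ^ 2 := sum_inner_sq_le_of_orthogonal hN hw _ a
    _ ≤ N * N⁻¹ := by gcongr
    _ = 1 := mul_inv_cancel₀ hN.ne'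

lemma exists_lipschitzWith_rademacherSum_eq_one (n k : ℕ) :
    ∃ ψ : ℝ → ℝ, LipschitzWith 1 ψ ∧ ψ 0 = 0 ∧ rademacherSum n k ψ = 1 := by
  obtain ⟨ψ, hψ, hψ0, hincr⟩ := exists_lipschitzWith_one_increments
    (fun j => (abs_rademacher k j).le) (by positivity : (0 : ℝ) < 2 ^ n)
  refine ⟨ψ, hψ, hψ0, ?_⟩
  simp only [rademacherSum, smul_eq_mul, hincr, mul_div_assoc', rademacher_mul_self]
  simp

lemma sum_abs_rpow_le_sqrt_card {ι : Type*} [Fintype ι] {b : ι → ℝ} (hb : ∑ i, b i ^ 2 ≤ 1)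
    {p : ℝ} (hp : 1 ≤ p) : ∑ i, |b i| ^ p ≤ √(Fintype.card ι) := by
  have hb1 : ∀ i, |b i| ≤ 1 := fun i => by
    have : b i ^ 2 ≤ 1 :=
      (single_le_sum (f := fun i => b i ^ 2) (fun i _ => sq_nonneg _) (mem_univ i)).trans hb
    exact abs_le_one_iff_mul_self_le_one.2 (by nlinarith)
  have hsum : ∑ i, |b i| ≤ √(Fintype.card ι) := by
    refine (Real.le_sqrt (sum_nonneg fun i _ => abs_nonneg _) (Nat.cast_nonneg _)).2 ?_
    calc (∑ i, |b i|) ^ 2 ≤ (Fintype.card ι) * ∑ i, |b i| ^ 2 := sq_sum_le_card_mul_sum_sq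
      _ ≤ Fintype.card ι := by
        simpa only [sq_abs] using mul_le_of_le_one_right (Nat.cast_nonneg _) hb
  exact (sum_le_sum fun i _ => Real.rpow_le_self_of_le_one (abs_nonneg _) (hb1 i) hp).trans hsum

lemma iSup_weak_lp_le_sqrt_rpow {E : Type*} [NormedAddCommGroup E] [NormedSpace ℝ E] {n : ℕ}
    {x : Fin n → E} (hx : ∀ g : E →L[ℝ] ℝ, ‖g‖ ≤ 1 → ∑ k, g (x k) ^ 2 ≤ 1) {p : ℝ} (hp : 1 ≤ p) :
    ⨆ g : {g : E →L[ℝ] ℝ // ‖g‖ ≤ 1}, (∑ k, |g.1 (x k)| ^ p) ^ (1 / p) ≤ √(n : ℝ) ^ (1 / p) :=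
  have : Nonempty {g : E →L[ℝ] ℝ // ‖g‖ ≤ 1} := ⟨⟨0, by simp⟩⟩
  ciSup_le fun g => Real.rpow_le_rpow (by positivity)
    (by simpa using sum_abs_rpow_le_sqrt_card (hx g.1 g.2) hp) (by positivity)

lemma exists_nat_lt_sqrt_rpow {p : ℝ} (hp : 0 < p) (c : ℝ) :
    ∃ n : ℕ, c < √(n : ℝ) ^ (1 / p) ∧ 0 < n := by
  have htends : Filter.Tendsto (fun n : ℕ => √(n : ℝ) ^ (1 / p)) Filter.atTop Filter.atTop :=
    (tendsto_rpow_atTop (by positivity)).comp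
      (Real.tendsto_sqrt_atTop.comp tendsto_natCast_atTop_atTop)
  exact ((htends.eventually_gt_atTop c).and (Filter.eventually_gt_atTop 0)).exists

lemma not_pSummingCond_id {E : Type*} [NormedAddCommGroup E] [NormedSpace ℝ E] {p : ℝ} (hp : 1 ≤ p)
    (hE : ∀ n : ℕ, ∃ x : Fin n → E,
      (∀ k, 1 ≤ ‖x k‖) ∧ ∀ g : E →L[ℝ] ℝ, ‖g‖ ≤ 1 → ∑ k, g (x k) ^ 2 ≤ 1)
    (C : ℝ) : ¬ PSummingCond p (ContinuousLinearMap.id ℝ E) C := by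
  intro hC
  have hp0 : 0 < p := zero_lt_one.trans_le hp
  obtain ⟨n, hCn, hn⟩ := exists_nat_lt_sqrt_rpow hp0 |C|
  obtain ⟨x, hx1, hxg⟩ := hE n
  set s := √(n : ℝ) ^ (1 / p)
  set W := ⨆ g : {g : E →L[ℝ] ℝ // ‖g‖ ≤ 1}, (∑ k, |g.1 (x k)| ^ p) ^ (1 / p)
  have hW : 0 ≤ W := Real.iSup_nonneg fun g => by positivity
  have hlower : (n : ℝ) ≤ ∑ k, ‖x k‖ ^ p := calc
    (n : ℝ) = ∑ _k : Fin n, (1 : ℝ) := by simp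
    _ ≤ ∑ k, ‖x k‖ ^ p := sum_le_sum fun k _ => Real.one_le_rpow (hx1 k) hp0.le
  refine lt_irrefl ((n : ℝ) ^ (1 / p)) ?_
  calc (n : ℝ) ^ (1 / p)
      ≤ (∑ k, ‖x k‖ ^ p) ^ (1 / p) := Real.rpow_le_rpow (Nat.cast_nonneg n) hlower (by positivity)
    _ ≤ C * W := by simpa only [ContinuousLinearMap.id_apply] using hC n x
    _ ≤ |C| * s := (mul_le_mul_of_nonneg_right (le_abs_self C) hW).trans
        (mul_le_mul_of_nonneg_left (iSup_weak_lp_le_sqrt_rpow hxg hp) (abs_nonneg C))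
    _ < s * s := mul_lt_mul_of_pos_right hCn (by positivity)
    _ = (n : ℝ) ^ (1 / p) := by
        rw [← Real.mul_rpow (by positivity) (by positivity), Real.mul_self_sqrt (Nat.cast_nonneg n)]

lemma lipPSummingCond_one_of_isometry {Y : Type*} [PseudoMetricSpace Y] {T : ℝ → Y}
    (hT : Isometry T) {p : ℝ} (hp : 0 ≤ p) : LipPSummingCond p (0 : ℝ) T 1 := by
  intro n x x' lam hlam
  rw [Real.one_rpow, one_mul]
  have hbdd : BddAbove
      (Set.range fun f : lipBall ℝ 0 => ∑ i, lam i * |f.1 (x i) - f.1 (x' i)| ^ p) := by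
    refine ⟨∑ i, lam i * dist (x i) (x' i) ^ p, ?_⟩
    rintro - ⟨f, rfl⟩
    refine sum_le_sum fun i _ => mul_le_mul_of_nonneg_left ?_ (hlam i)
    refine Real.rpow_le_rpow (abs_nonneg _) ?_ hp
    simpa [Real.dist_eq] using f.2.1.dist_le_mul (x i) (x' i)
  exact le_ciSup_of_le hbdd ⟨id, LipschitzWith.id, rfl⟩ (by simp [hT.dist_eq, Real.dist_eq])

lemma lipConst_le {α β : Type*} [PseudoMetricSpace α] [PseudoMetricSpace β] {g : α → β} {K : ℝ≥0}
    (hg : LipschitzWith K g) : lipConst g ≤ K :=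
  csInf_le (OrderBot.bddBelow _) hg

lemma IsFreeSpace.exists_norm_le_one_comp_eq {X : Type u} [MetricSpace X] {x0 : X} {F : Type v}
    [NormedAddCommGroup F] [NormedSpace ℝ F] [CompleteSpace F] {δ : X → F}
    (hfree : IsFreeSpace.{u, v, 0} x0 δ) {φ : X → ℝ} (hφ : LipschitzWith 1 φ) (hφ0 : φ x0 = 0) :
    ∃ g : F →L[ℝ] ℝ, ‖g‖ ≤ 1 ∧ g ∘ δ = φ := by
  obtain ⟨g, ⟨hgδ, hg⟩, -⟩ := hfree.2.2.2 ℝ φ ⟨1, hφ⟩ hφ0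
  exact ⟨g, hg ▸ by exact_mod_cast lipConst_le hφ, funext hgδ⟩

lemma IsFreeSpace.exists_weakly_l2_family_one_le_norm {F : Type v} [NormedAddCommGroup F]
    [NormedSpace ℝ F] [CompleteSpace F] {δ : ℝ → F} (hfree : IsFreeSpace.{0, v, 0} (0 : ℝ) δ)
    (n : ℕ) :
    ∃ x : Fin n → F, (∀ k, 1 ≤ ‖x k‖) ∧ ∀ g : F →L[ℝ] ℝ, ‖g‖ ≤ 1 → ∑ k, g (x k) ^ 2 ≤ 1 := by
  have hδ : Isometry δ := Isometry.of_dist_eq hfree.1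
  refine ⟨fun k => rademacherSum n k δ, fun k => ?_, fun g hg => ?_⟩
  · obtain ⟨ψ, hψ, hψ0, hψk⟩ := exists_lipschitzWith_rademacherSum_eq_one n k
    obtain ⟨g, hg, hgψ⟩ := hfree.exists_norm_le_one_comp_eq hψ hψ0
    calc 1 = g (rademacherSum n k δ) := by rw [map_rademacherSum g, hgψ, hψk]
      _ ≤ ‖g‖ * ‖rademacherSum n k δ‖ := (le_abs_self _).trans (g.le_opNorm _)
      _ ≤ ‖rademacherSum n k δ‖ := mul_le_of_le_one_left (norm_nonneg _) hg
  · have hgδ : LipschitzWith 1 (g ∘ δ) := by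
      simpa using (g.lipschitz.weaken (show ‖g‖₊ ≤ 1 from hg)).comp hδ.lipschitz
    simpa only [map_rademacherSum g] using sum_sq_rademacherSum_le hgδ n

/-- The canonical embedding `δ_ℝ : ℝ → ℱ(ℝ)` into a Lipschitz-free
space over `ℝ` (pointed at `0`) is Lipschitz `p`-summing, but its linearization, the
identity operator on `ℱ(ℝ)`, is not `p`-summing. -/
theorem delta_lipPSumming_id_not_pSumming (p : ℝ) (hp : 1 ≤ p)
    {F : Type} [NormedAddCommGroup F] [NormedSpace ℝ F] [CompleteSpace F]
    (δ : ℝ → F) (hfree : IsFreeSpace.{0, 0, 0} (0 : ℝ) δ) :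
    (∃ C > 0, LipPSummingCond p (0 : ℝ) δ C) ∧
    ¬ (∃ C > 0, PSummingCond p (ContinuousLinearMap.id ℝ F) C) := by
  have hδ : Isometry δ := Isometry.of_dist_eq hfree.1
  refine ⟨⟨1, one_pos, lipPSummingCond_one_of_isometry hδ (by linarith)⟩, ?_⟩
  rintro ⟨C, -, hC⟩
  exact not_pSummingCond_id hp hfree.exists_weakly_l2_family_one_le_norm C hC

end
end
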